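/- Let M be an L-structure, X ⊆ M a ∅-definable subset, and suppose there is a ∅-definable surjection d from X onto M (graph ∅-definable, d maps X onto all of M) together with a ∅-definable relation ≺ that well-orders X. Then every nonempty ∅-definable subset S of M contains an element definable from a single parameter in X; in fact, for the ≺-least x ∈ X with d(x) ∈ S, the element d(x) ∈ S is {x}-definable. -/

import Mathlib

open FirstOrder Set

/-! `{d x}` is the fibre over `x` of the ∅-definable graph of `d`, and fixing a coordinate of a
definable relation to a parameter keeps it definable over that parameter. -/

namespace Set

variable {L : FirstOrder.Language} {M : Type*} [L.Structure M] {A : Set M}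

theorem Definable₂.definable₁_fiber {R : Set (M × M)} (hR : A.Definable₂ L R) {a : M}
    (ha : a ∈ A) : A.Definable₁ L {y | (a, y) ∈ R} := by
  have hF : A.DefinableMap L (fun v : Fin 1 → M => ![a, v 0]) := by
    intro i
    fin_cases i
    · exact L.definableFun_const (Fin 1) ha
    · exact DefinableFun.proj L
  exact hR.preimage_map hF

theorem Definable₂.definable₁_singleton_apply {f : M → M}
    (hf : A.Definable₂ L {p : M × M | p.2 = f p.1}) {a : M} (ha : a ∈ A) :
    A.Definable₁ L {f a} := by
  have hfibre : {f a} = {y | (a, y) ∈ {p : M × M | p.2 = f p.1}} := by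
    ext y
    simp
  exact hfibre ▸ hf.definable₁_fiber ha

end Set

theorem definable_surjection_param_definable_elem_general
    {L : FirstOrder.Language} {M : Type*} [L.Structure M]
    (X : Set M)
    (d : M → M) (hddef : (∅ : Set M).Definable₂ L {p : M × M | p.2 = d p.1})
    (hdsurj : ∀ m : M, ∃ x ∈ X, d x = m)
    (r : M → M → Prop)
    (hwo : IsWellOrder X (fun a b : X => r a.1 b.1))
    (S : Set M) (hne : S.Nonempty) :
    ∃ x ∈ X, d x ∈ S ∧ (∀ y ∈ X, d y ∈ S → ¬ r y x) ∧
      ({x} : Set M).Definable₁ L {d x} := by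
  obtain ⟨m, hm⟩ := hne
  obtain ⟨x₀, hx₀X, rfl⟩ := hdsurj m
  obtain ⟨⟨x, hxX⟩, hxS, hmin⟩ := hwo.wf.has_min {a : X | d a ∈ S} ⟨⟨x₀, hx₀X⟩, hm⟩
  exact ⟨x, hxX, hxS, fun y hyX hyS => hmin ⟨y, hyX⟩ hyS,
    Definable₂.definable₁_singleton_apply (hddef.mono (empty_subset _)) (mem_singleton x)⟩

theorem definable_surjection_param_definable_elem
    {L : FirstOrder.Language} {M : Type*} [L.Structure M]
    (X : Set M) (hX : (∅ : Set M).Definable₁ L X)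
    (d : M → M) (hddef : (∅ : Set M).Definable₂ L {p : M × M | p.2 = d p.1})
    (hdsurj : ∀ m : M, ∃ x ∈ X, d x = m)
    (r : M → M → Prop) (hrdef : (∅ : Set M).Definable₂ L {p : M × M | r p.1 p.2})
    (hwo : IsWellOrder X (fun a b : X => r a.1 b.1))
    (S : Set M) (hS : (∅ : Set M).Definable₁ L S) (hne : S.Nonempty) :
    ∃ x ∈ X, d x ∈ S ∧ (∀ y ∈ X, d y ∈ S → ¬ r y x) ∧
      ({x} : Set M).Definable₁ L {d x} :=
  definable_surjection_param_definable_elem_general X d hddef hdsurj r hwo S hne
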